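/- arXiv:1206.5094 — 4 statements merged into one kernel-verified Lean document; each statement's English description precedes it below -/
import Mathlib

section
/- Let n be an odd natural number and let z : ZMod n → ℂ be a function with each z i a fourth root of unity (i.e. z i ∈ {1, -1, i, -i}). Then it is impossible that for all i, (z i)^2 * (z (i+2))^2 = - (z (i+1))^2 * (z (i+3))^2. -/
/-!
Write `w i = z i ^ 2`. Multiplying the relation over all `i : ZMod n` and reindexing each shifted
product, the left side becomes `P ^ 2` and the right side `(-1) ^ n * P ^ 2 = -P ^ 2`, where
`P = ∏ i, w i`. Since every `w i` is nonzero, `P ^ 2 = -P ^ 2` is impossible in `ℂ`.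
-/

open Finset

theorem Fintype.prod_comp_add_right {G M : Type*} [AddGroup G] [Fintype G] [CommMonoid M]
    (f : G → M) (c : G) : ∏ i, f (i + c) = ∏ i, f i :=
  Equiv.prod_comp (Equiv.addRight c) f

theorem not_forall_mul_comp_add_eq_neg {G R : Type*} [AddGroup G] [Fintype G] [CommRing R]
    [NoZeroDivisors R] [CharZero R] (hG : Odd (Fintype.card G)) {w : G → R}
    (hw : ∀ i, w i ≠ 0) (a b c : G) :
    ¬ ∀ i, w i * w (i + a) = -(w (i + b) * w (i + c)) := by
  intro h
  set P := ∏ i, w i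
  have hP : P ≠ 0 := prod_ne_zero_iff.mpr fun i _ => hw i
  have key : P * P = -(P * P) := calc
    P * P = ∏ i, w i * w (i + a) := by rw [prod_mul_distrib, Fintype.prod_comp_add_right]
    _ = ∏ i, -(w (i + b) * w (i + c)) := prod_congr rfl fun i _ => h i
    _ = -(P * P) := by
      rw [prod_neg, card_univ, hG.neg_one_pow, prod_mul_distrib, Fintype.prod_comp_add_right,
        Fintype.prod_comp_add_right, neg_one_mul]
  exact mul_ne_zero hP hP (self_eq_neg.mp key)

theorem stmt_0 (n : ℕ) (hn : Odd n) (z : ZMod n → ℂ)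
    (hz : ∀ i, z i ∈ ({1, -1, Complex.I, -Complex.I} : Set ℂ)) :
    ¬ (∀ i : ZMod n, (z i) ^ 2 * (z (i + 2)) ^ 2 = -((z (i + 1)) ^ 2 * (z (i + 3)) ^ 2)) := by
  have : NeZero n := ⟨hn.pos.ne'⟩
  have hz₀ : ∀ i, z i ≠ 0 := fun i h₀ => by simpa [h₀, eq_comm, Complex.I_ne_zero] using hz i
  exact not_forall_mul_comp_add_eq_neg (by rwa [ZMod.card]) (fun i => pow_ne_zero 2 (hz₀ i)) 2 1 3
end

section
/- Let n be odd and let w : ZMod n → ℂ be a function with |w i| = 1 for all i, satisfying w i * w (i+2) = - (w (i+1)) * (w (i+3)) for all i ∈ ZMod n. Then no such w exists (the hypotheses are contradictory). -/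
/-!
Put `f i = w i * w (i + 2)`. The relation says `f i = -f (i + 1)`, so `f` alternates in sign
along the cycle `ZMod n`; going once around an odd cycle gives `f i = -f i`, hence `f i = 0`,
while `‖f i‖ = 1`.
-/

namespace ZMod

variable {n : ℕ} {G : Type*} [AddGroup G] {f : ZMod n → G}

theorem eq_add_two_mul_of_forall_eq_neg_succ (hf : ∀ i, f i = -f (i + 1)) (k : ℕ) (i : ZMod n) :
    f i = f (i + 2 * k) := by
  induction k with
  | zero => simp
  | succ k ih =>
    rw [ih, hf, hf (_ + 1), neg_neg]
    push_cast
    ring_nf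

theorem eq_neg_self_of_forall_eq_neg_succ (hn : Odd n) (hf : ∀ i, f i = -f (i + 1))
    (i : ZMod n) : f i = -f i := by
  obtain ⟨m, rfl⟩ := hn
  have hcycle : i + 2 * m + 1 = i := by
    have h : ((2 * m + 1 : ℕ) : ZMod (2 * m + 1)) = 0 := natCast_self _
    push_cast at h
    rw [add_assoc, h, add_zero]
  conv_rhs => rw [← hcycle]
  rw [← hf]
  exact_mod_cast eq_add_two_mul_of_forall_eq_neg_succ hf m i

theorem eq_zero_of_forall_eq_neg_succ [IsAddTorsionFree G] (hn : Odd n)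
    (hf : ∀ i, f i = -f (i + 1)) (i : ZMod n) : f i = 0 :=
  self_eq_neg.mp (eq_neg_self_of_forall_eq_neg_succ hn hf i)

end ZMod

theorem stmt_1 (n : ℕ) (hn : Odd n) :
    ¬ ∃ w : ZMod n → ℂ, (∀ i, ‖w i‖ = 1) ∧
      (∀ i : ZMod n, w i * w (i + 2) = -(w (i + 1) * w (i + 3))) := by
  rintro ⟨w, hnorm, hrel⟩
  have hf : ∀ i, w i * w (i + 2) = -(w (i + 1) * w (i + 1 + 2)) := fun i => by
    rw [add_assoc, show (1 : ZMod n) + 2 = 3 by norm_num, hrel]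
  have hzero := ZMod.eq_zero_of_forall_eq_neg_succ (f := fun i => w i * w (i + 2)) hn hf 0
  simpa [hnorm] using congrArg norm hzero
end

section
/- In the real Clifford algebra Cl(n) of the standard positive definite quadratic form on ℝⁿ (n odd, n ≥ 3), let a = ∏_{k ≠ i} e_k and b = ∏_{k ≠ j} e_k be the ordered products of the standard generators omitting index i and index j respectively, with i ≠ j. Then a * b = - b * a. -/
/-- The standard positive definite quadratic form on `ℝⁿ`. -/
noncomputable def stdQF (n : ℕ) : QuadraticForm ℝ (Fin n → ℝ) :=
  QuadraticMap.weightedSumSquares ℝ (fun _ : Fin n => (1 : ℝ))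

/-- The standard generators `e k` of the Clifford algebra `Cl(n)`. -/
noncomputable def cliffGen (n : ℕ) (k : Fin n) : CliffordAlgebra (stdQF n) :=
  CliffordAlgebra.ι (stdQF n) (Pi.single k 1)

/-- The ordered product `∏_{k ≠ i} e_k` of the standard generators, omitting `i`. -/
noncomputable def omitProd (n : ℕ) (i : Fin n) : CliffordAlgebra (stdQF n) :=
  (((List.finRange n).filter (fun k => k ≠ i)).map (cliffGen n)).prod

/-!
Distinct standard generators anticommute, so reordering a product of generators `e_{l₁} ⋯ e_{l_p}`
past `e_m` costs one sign for each factor `e_l` with `l ≠ m`. Swapping `a = ∏_{k ≠ i} e_k` and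
`b = ∏_{k ≠ j} e_k` therefore costs `(n - 1)² - (n - 2) = (n - 1)(n - 2) + 1` signs: each of the
`n - 1` factors of `b` passes the `n - 2` factors of `a` different from it, and `e_i` passes one more.
A product of two consecutive integers is even, so this number is odd.
-/

open Finset

section Anticommuting

variable {A ι : Type*} [Ring A] [DecidableEq ι] {x : ι → A}

theorem mul_neg_one_pow_mul (a b : A) (c : ℕ) : a * ((-1) ^ c * b) = (-1) ^ c * (a * b) :=
  (((Commute.neg_one_left a).pow_left c).left_comm b).symm

theorem prod_map_mul_of_pairwise_anticomm (hx : Pairwise fun k l => x k * x l = -(x l * x k))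
    (L : List ι) (m : ι) :
    (L.map x).prod * x m = (-1) ^ L.countP (· ≠ m) * (x m * (L.map x).prod) := by
  induction L with
  | nil => simp
  | cons l L ih =>
    have hpass : x l * (L.map x).prod * x m =
        (-1) ^ L.countP (· ≠ m) * (x l * x m * (L.map x).prod) := by
      rw [mul_assoc, ih, mul_neg_one_pow_mul, mul_assoc]
    by_cases hlm : l = m
    · subst hlm
      simpa [mul_assoc] using hpass
    · rw [List.map_cons, List.prod_cons, hpass, hx hlm,
        List.countP_cons_of_pos (by simpa using hlm), pow_succ]
      noncomm_ring

theorem prod_map_mul_prod_map_of_pairwise_anticomm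
    (hx : Pairwise fun k l => x k * x l = -(x l * x k)) (L M : List ι) :
    (L.map x).prod * (M.map x).prod =
      (-1) ^ (M.map fun m => L.countP (· ≠ m)).sum * ((M.map x).prod * (L.map x).prod) := by
  induction M with
  | nil => simp
  | cons m M ih =>
    rw [List.map_cons, List.prod_cons, ← mul_assoc, prod_map_mul_of_pairwise_anticomm hx,
      mul_assoc, mul_assoc, ih, mul_neg_one_pow_mul, List.map_cons, List.sum_cons, pow_add]
    simp only [mul_assoc]

end Anticommuting

theorem List.countP_finRange {n : ℕ} (p : Fin n → Bool) :
    (List.finRange n).countP p = #{k | p k} := by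
  rw [Finset.card_def, Finset.filter_val, Finset.val_univ_fin, Multiset.filter_coe,
    Multiset.coe_card, List.countP_eq_length_filter]
  simp

theorem List.sum_map_filter_finRange {M : Type*} [AddCommMonoid M] {n : ℕ} (p : Fin n → Bool)
    (f : Fin n → M) : (((List.finRange n).filter p).map f).sum = ∑ k with p k, f k := by
  rw [← List.sum_toFinset _ ((List.nodup_finRange n).filter p), List.toFinset_filter,
    List.toFinset_finRange]

theorem card_filter_ne_and_ne {n : ℕ} (hn : 2 ≤ n) (i m : Fin n) :
    #{k | k ≠ m ∧ k ≠ i} = n - 2 + if m = i then 1 else 0 := by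
  have hcompl : ({k | k ≠ m ∧ k ≠ i} : Finset (Fin n)) = {m, i}ᶜ := by ext; simp
  rw [hcompl, card_compl, Fintype.card_fin]
  split_ifs with hmi
  · subst hmi
    simp only [insert_eq_of_mem, mem_singleton, card_singleton]
    omega
  · rw [card_pair hmi, add_zero]

theorem countP_ne_filter_ne_finRange {n : ℕ} (hn : 2 ≤ n) (i m : Fin n) :
    ((List.finRange n).filter (· ≠ i)).countP (· ≠ m) = n - 2 + if m = i then 1 else 0 := by
  rw [List.countP_filter, List.countP_finRange, ← card_filter_ne_and_ne hn]
  simp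

theorem sum_countP_ne_filter_ne_finRange {n : ℕ} {i j : Fin n} (hij : i ≠ j) :
    (((List.finRange n).filter (· ≠ j)).map
      fun m => ((List.finRange n).filter (· ≠ i)).countP (· ≠ m)).sum = (n - 1) * (n - 2) + 1 := by
  have hn : 2 ≤ n := by have := Fin.val_ne_of_ne hij; omega
  simp only [countP_ne_filter_ne_finRange hn, List.sum_map_filter_finRange]
  rw [sum_add_distrib, sum_const, sum_ite_eq']
  simp [hij, filter_ne', card_erase_of_mem]

theorem stdQF_isOrtho_single {n : ℕ} {k l : Fin n} (h : k ≠ l) :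
    (stdQF n).IsOrtho (Pi.single k 1) (Pi.single l 1) := by
  simp [QuadraticMap.isOrtho_def, stdQF, Pi.single_apply, mul_add, sum_add_distrib, h, h.symm]

theorem cliffGen_pairwise_anticomm (n : ℕ) :
    Pairwise fun k l => cliffGen n k * cliffGen n l = -(cliffGen n l * cliffGen n k) :=
  fun _ _ h => CliffordAlgebra.ι_mul_ι_comm_of_isOrtho (stdQF_isOrtho_single h)

theorem stmt_11_general (n : ℕ) (i j : Fin n) (hij : i ≠ j) :
    omitProd n i * omitProd n j = -(omitProd n j * omitProd n i) := by
  have hodd : Odd ((n - 1) * (n - 2) + 1) := (Nat.even_mul_pred_self (n - 1)).add_one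
  rw [omitProd, omitProd, prod_map_mul_prod_map_of_pairwise_anticomm (cliffGen_pairwise_anticomm n),
    sum_countP_ne_filter_ne_finRange hij, hodd.neg_one_pow, neg_one_mul]

theorem stmt_11 (n : ℕ) (hn : Odd n) (h3 : 3 ≤ n) (i j : Fin n) (hij : i ≠ j) :
    omitProd n i * omitProd n j = -(omitProd n j * omitProd n i) :=
  stmt_11_general n i j hij
end

section
/- Let Γ be a group generated by elements β_1, ..., β_n together with a central-free abelian setup as follows: β_i = (B_i, b_i) ∈ O(n) ⋉ ℝⁿ where B_i is diagonal with +1 only in position i and b_i = (0,...,0,1/2,1/2,0,...,0) (the 1/2's in positions i, i+1 mod n), for 1 ≤ i ≤ n−1, and β_n = (β_1⋯β_{n−1})^{−1}. Then for each i, (β_i)² is the translation t_i by the i-th standard basis vector, and (β_i β_{i+2})² is the translation t_{i+1} t_{i+3}^{−1} (indices mod n). -/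
/-!
Every generator, `β_n` included, has the shape `(B_i, b_i)`. Indeed, multiplying out,
`β_1 ⋯ β_{n-1}` has diagonal `(-1)^(n-1) B_n = B_n` (as `n` is odd) and translation part
`(e_1 - e_n) / 2`, because the contributions `± 1/2` of consecutive factors telescope; its
inverse is therefore `(B_n, b_n)`. Both identities then follow from `(B, b)² = (B², B b + b)`,
evaluated on the coordinates `i, i + 1, i + 2, i + 3`, which are distinct as `n ≥ 4`.
-/

/-- The affine transformation of `ℝⁿ` (with coordinates indexed mod `n`) given by
the pair `(diag B, s)` in `O(n) ⋉ ℝⁿ`, acting by `x ↦ (diag B) x + s`. -/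
def hwAffZ (n : ℕ) (B s : ZMod n → ℝ) : (ZMod n → ℝ) → (ZMod n → ℝ) :=
  fun x j => B j * x j + s j

open Function

namespace CyclicHW

variable {n : ℕ}

lemma hwAffZ_comp (B s C t : ZMod n → ℝ) :
    hwAffZ n B s ∘ hwAffZ n C t = hwAffZ n (B * C) (B * t + s) := by
  funext x j
  simp only [comp_apply, hwAffZ, Pi.mul_apply, Pi.add_apply]
  ring

lemma hwAffZ_one (t : ZMod n → ℝ) : hwAffZ n 1 t = fun x j => x j + t j := by
  funext x j
  simp [hwAffZ]

lemma hwAffZ_one_zero : hwAffZ n 1 0 = id := by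
  funext x j
  simp [hwAffZ]

lemma hwAffZ_comp_self_of_mul_self (B s : ZMod n → ℝ) (hB : B * B = 1) :
    hwAffZ n B s ∘ hwAffZ n B s = hwAffZ n 1 (B * s + s) := by
  rw [hwAffZ_comp, hB]

lemma eq_natCast_iff_val_eq [NeZero n] (j : ZMod n) (k : ℕ) : j = k ↔ j.val = k % n := by
  rw [← (ZMod.val_injective n).eq_iff, ZMod.val_natCast]

/-- `β_i = (B_i, b_i)` for every `i : ZMod n`; the paper's `β_n` is `gen n 0`. -/
noncomputable def gen (n : ℕ) (i : ZMod n) : (ZMod n → ℝ) → (ZMod n → ℝ) :=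
  hwAffZ n (fun j => if j = i then 1 else -1) (fun j => if j = i ∨ j = i + 1 then 1/2 else 0)

/-- The diagonal of `B_1 ⋯ B_m`. -/
def prefixLinear (n m : ℕ) (j : ZMod n) : ℝ :=
  if 1 ≤ j.val ∧ j.val ≤ m then (-1) ^ (m + 1) else (-1) ^ m

/-- The translation part of `β_1 ⋯ β_m`: the contributions `± 1/2` of consecutive factors
cancel except at the coordinates `1` and `m + 1`. -/
noncomputable def prefixShift (n m : ℕ) (j : ZMod n) : ℝ :=
  (if j = 1 then 1/2 else 0) + if j = ((m + 1 : ℕ) : ZMod n) then (-1) ^ (m + 1) / 2 else 0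

lemma foldr_comp_eq_foldr_id_comp {α : Type*} (l : List (α → α)) (g : α → α) :
    l.foldr (· ∘ ·) g = l.foldr (· ∘ ·) id ∘ g := by
  induction l with
  | nil => rfl
  | cons f l ih => simp only [List.foldr_cons, ih]; rfl

lemma foldr_comp_gen_eq (m : ℕ) (hm : m < n) :
    ((List.range m).map (fun k => gen n ((k + 1 : ℕ) : ZMod n))).foldr (· ∘ ·) id =
      hwAffZ n (prefixLinear n m) (prefixShift n m) := by
  have : NeZero n := ⟨by omega⟩
  induction m with
  | zero =>
    funext x j
    have hj : ¬ (1 ≤ j.val ∧ j.val ≤ 0) := by omega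
    simp only [List.range_zero, List.map_nil, List.foldr_nil, id, hwAffZ, prefixLinear,
      prefixShift, if_neg hj, zero_add, Nat.cast_one]
    split_ifs <;> ring
  | succ m ih =>
    rw [List.range_succ, List.map_append, List.foldr_append, List.map_singleton,
      List.foldr_cons, List.foldr_nil, comp_id, foldr_comp_eq_foldr_id_comp, ih (by omega), gen,
      hwAffZ_comp]
    have hval : ∀ j : ZMod n, (j = ((m + 1 : ℕ) : ZMod n) ↔ j.val = m + 1) ∧
        (j = ((m + 1 : ℕ) : ZMod n) + 1 ↔ j.val = (m + 2) % n) ∧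
        (j = ((m + 1 + 1 : ℕ) : ZMod n) ↔ j.val = (m + 2) % n) ∧ (j = 1 ↔ j.val = 1) := by
      intro j
      refine ⟨?_, ?_, ?_, ?_⟩
      · rw [eq_natCast_iff_val_eq, Nat.mod_eq_of_lt hm]
      · rw [← Nat.cast_succ, eq_natCast_iff_val_eq]
      · rw [eq_natCast_iff_val_eq]
      · rw [← Nat.cast_one, eq_natCast_iff_val_eq, Nat.mod_eq_of_lt (by omega)]
    have hwrap : (m + 2) % n = m + 2 ∨ ((m + 2) % n = 0 ∧ m + 2 = n) := by
      rcases Nat.lt_or_ge (m + 2) n with h | h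
      · exact Or.inl (Nat.mod_eq_of_lt h)
      · exact Or.inr ⟨by rw [show m + 2 = n by omega, Nat.mod_self], by omega⟩
    generalize (m + 2) % n = r at hval hwrap
    congr 1 <;> funext j <;> obtain ⟨hi, hi1, hi1', hone⟩ := hval j <;>
      simp only [Pi.mul_apply, Pi.add_apply, prefixLinear, prefixShift, hi, hi1, hi1', hone] <;>
      split_ifs <;> first | omega | ring

lemma gen_zero_comp_prefix (hn : Odd n) (h1 : 1 < n) :
    gen n 0 ∘ hwAffZ n (prefixLinear n (n - 1)) (prefixShift n (n - 1)) = id := by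
  have : NeZero n := ⟨by omega⟩
  have hodd : (-1 : ℝ) ^ n = -1 := hn.neg_one_pow
  have heven : (-1 : ℝ) ^ (n - 1) = 1 := (Nat.Odd.sub_odd hn odd_one).neg_one_pow
  rw [gen, hwAffZ_comp, ← hwAffZ_one_zero]
  have hzero (j : ZMod n) : j = 0 ↔ j.val = 0 := ZMod.val_eq_zero j |>.symm
  have hone (j : ZMod n) : j = 1 ↔ j.val = 1 := by
    rw [← Nat.cast_one, eq_natCast_iff_val_eq, Nat.mod_eq_of_lt h1]
  congr 1 <;> funext j <;>
    simp only [Pi.mul_apply, Pi.add_apply, Pi.one_apply, Pi.zero_apply, prefixLinear,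
      prefixShift, Nat.sub_add_cancel (by omega : 1 ≤ n), ZMod.natCast_self, zero_add, hodd,
      heven, hzero, hone] <;>
    have hj := j.val_lt <;> split_ifs <;> first | omega | norm_num

lemma gen_comp_gen_self (i : ZMod n) :
    gen n i ∘ gen n i = fun x j => x j + if j = i then 1 else 0 := by
  rw [gen, hwAffZ_comp_self_of_mul_self, hwAffZ_one]
  · funext x j
    simp only [Pi.mul_apply, Pi.add_apply]
    split_ifs <;> first | tauto | ring
  · funext j
    simp only [Pi.mul_apply, Pi.one_apply]
    split_ifs <;> norm_num

lemma gen_comp_gen_add_two_sq (h4 : 4 ≤ n) (i : ZMod n) :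
    (gen n i ∘ gen n (i + 2)) ∘ (gen n i ∘ gen n (i + 2)) =
      fun x j => x j + (if j = i + 1 then 1 else 0) - (if j = i + 3 then 1 else 0) := by
  have : NeZero n := ⟨by omega⟩
  rw [gen, gen, hwAffZ_comp, hwAffZ_comp_self_of_mul_self, hwAffZ_one]
  · funext x j
    obtain ⟨d, rfl⟩ : ∃ d, j = i + d := ⟨j - i, by ring⟩
    have h0 : d = 0 ↔ d.val = 0 := (ZMod.val_eq_zero d).symm
    have h1 : d = 1 ↔ d.val = 1 := by
      rw [← (ZMod.val_injective n).eq_iff, ZMod.val_one_eq_one_mod, Nat.mod_eq_of_lt (by omega)]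
    have h2 : d = 2 ↔ d.val = 2 := by
      rw [← (ZMod.val_injective n).eq_iff, ZMod.val_ofNat_of_lt (show 2 < n by omega)]
    have h3 : d = 3 ↔ d.val = 3 := by
      rw [← (ZMod.val_injective n).eq_iff, ZMod.val_ofNat_of_lt (show 3 < n by omega)]
    simp only [Pi.mul_apply, Pi.add_apply, show i + 2 + 1 = i + 3 by ring, add_eq_left,
      add_right_inj, h0, h1, h2, h3]
    split_ifs <;> first | omega | ring
  · funext j
    simp only [Pi.mul_apply, Pi.one_apply]
    split_ifs <;> norm_num

end CyclicHW

open CyclicHW in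
theorem stmt_12_general (n : ℕ) (hn : Odd n) (h5 : 5 ≤ n)
    (β : ZMod n → ((ZMod n → ℝ) → (ZMod n → ℝ)))
    -- for `1 ≤ i ≤ n-1`, `β_i = (B_i, b_i)` with `B_i` diagonal with `+1` only in
    -- position `i`, and `b_i` having `1/2` exactly in positions `i` and `i+1`
    (hβ : ∀ i : ZMod n, i ≠ 0 →
      β i = hwAffZ n (fun j => if j = i then 1 else -1)
        (fun j => if j = i ∨ j = i + 1 then 1/2 else 0))
    -- `β_n` (here indexed by `0 = n` in `ZMod n`) is the inverse of `β_1 ⋯ β_{n-1}`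
    (hβ0r : (((List.range (n - 1)).map
        (fun k => β ((k + 1 : ℕ) : ZMod n))).foldr (· ∘ ·) id) ∘ β 0 = id) :
    -- `(β_i)² = t_i`, the translation by the `i`-th standard basis vector, and
    -- `(β_i β_{i+2})² = t_{i+1} t_{i+3}⁻¹` (indices mod `n`)
    (∀ i : ZMod n, β i ∘ β i = fun x j => x j + if j = i then 1 else 0) ∧
    (∀ i : ZMod n, (β i ∘ β (i + 2)) ∘ (β i ∘ β (i + 2)) =
      fun x j => x j + (if j = i + 1 then 1 else 0) - (if j = i + 3 then 1 else 0)) := by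
  have hprefix : ((List.range (n - 1)).map (fun k => β ((k + 1 : ℕ) : ZMod n))).foldr (· ∘ ·) id
      = hwAffZ n (prefixLinear n (n - 1)) (prefixShift n (n - 1)) := by
    rw [← foldr_comp_gen_eq (n - 1) (by omega)]
    congr 1
    refine List.map_congr_left fun k hk => hβ _ ?_
    rw [Ne, ZMod.natCast_eq_zero_iff]
    exact Nat.not_dvd_of_pos_of_lt k.succ_pos (by rw [List.mem_range] at hk; omega)
  have hgen (i : ZMod n) : β i = gen n i := by
    by_cases hi : i = 0
    · subst hi
      rw [hprefix] at hβ0r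
      have hleft : LeftInverse (gen n 0)
          (hwAffZ n (prefixLinear n (n - 1)) (prefixShift n (n - 1))) :=
        congrFun (gen_zero_comp_prefix hn (by omega))
      exact (hleft.eq_rightInverse (congrFun hβ0r)).symm
    · exact hβ i hi
  simp only [hgen]
  exact ⟨gen_comp_gen_self, gen_comp_gen_add_two_sq (by omega)⟩

theorem stmt_12 (n : ℕ) (hn : Odd n) (h5 : 5 ≤ n)
    (β : ZMod n → ((ZMod n → ℝ) → (ZMod n → ℝ)))
    -- for `1 ≤ i ≤ n-1`, `β_i = (B_i, b_i)` with `B_i` diagonal with `+1` only in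
    -- position `i`, and `b_i` having `1/2` exactly in positions `i` and `i+1`
    (hβ : ∀ i : ZMod n, i ≠ 0 →
      β i = hwAffZ n (fun j => if j = i then 1 else -1)
        (fun j => if j = i ∨ j = i + 1 then 1/2 else 0))
    -- `β_n` (here indexed by `0 = n` in `ZMod n`) is the inverse of `β_1 ⋯ β_{n-1}`
    (hβ0l : β 0 ∘ (((List.range (n - 1)).map
        (fun k => β ((k + 1 : ℕ) : ZMod n))).foldr (· ∘ ·) id) = id)
    (hβ0r : (((List.range (n - 1)).map
        (fun k => β ((k + 1 : ℕ) : ZMod n))).foldr (· ∘ ·) id) ∘ β 0 = id) :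
    -- `(β_i)² = t_i`, the translation by the `i`-th standard basis vector, and
    -- `(β_i β_{i+2})² = t_{i+1} t_{i+3}⁻¹` (indices mod `n`)
    (∀ i : ZMod n, β i ∘ β i = fun x j => x j + if j = i then 1 else 0) ∧
    (∀ i : ZMod n, (β i ∘ β (i + 2)) ∘ (β i ∘ β (i + 2)) =
      fun x j => x j + (if j = i + 1 then 1 else 0) - (if j = i + 3 then 1 else 0)) :=
  stmt_12_general n hn h5 β hβ hβ0r
end
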